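/- arXiv:2506.22228 — 3 statements merged into one kernel-verified Lean document; each statement's English description precedes it below -/
import Mathlib

section
/- Consider the discrete circle P_n partitioned into M blocks of consecutive indices, and for S_0 > 0 let F = {(k,ℓ) : k ≠ ℓ, x_k ∼ x_ℓ, S_0·‖x_k−x_ℓ‖ ≤ 1} be the set of ordered same-block pairs at Euclidean distance at most 1/S_0. There exist constants c_1, C_1 > 0 and N such that for all n ≥ N, all M dividing n with M ≥ 3, and all S_0 with M ≤ S_0 ≤ n/10, one has c_1·n²/S_0 ≤ |F| ≤ C_1·n²/S_0. -/
open Real Finset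

/-- The `i`-th point of the discrete circle `P_n ⊂ ℝ²`:
`x_i = (cos(2πi/n), sin(2πi/n))`. -/
noncomputable def circlePt (n : ℕ) (i : Fin n) : EuclideanSpace ℝ (Fin 2) :=
  WithLp.toLp 2 fun j => if j = 0 then Real.cos (2 * Real.pi * (i.val : ℝ) / n)
           else Real.sin (2 * Real.pi * (i.val : ℝ) / n)

/-- With the indices `{0, …, n−1}` partitioned into `M` blocks of `n/M` consecutive indices,
`i ∼ j` iff `i` and `j` lie in the same block. -/
def sameBlock (n M : ℕ) (i j : Fin n) : Prop :=
  i.val / (n / M) = j.val / (n / M)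

instance (n M : ℕ) (i j : Fin n) : Decidable (sameBlock n M i j) := by
  unfold sameBlock; infer_instance

/-- The set `F` of ordered same-block pairs of distinct indices whose circle points are at
Euclidean distance at most `1/S₀`. -/
noncomputable def closeSameBlockPairs (n M : ℕ) (S₀ : ℝ) : Finset (Fin n × Fin n) :=
  Finset.univ.filter (fun p : Fin n × Fin n =>
    p.1 ≠ p.2 ∧ sameBlock n M p.1 p.2 ∧
      S₀ * ‖circlePt n p.1 - circlePt n p.2‖ ≤ 1)

/-!
The chord from `x_i` to `x_j` has length `2 |sin (π (i - j) / n)|`. Indices in a common block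
are less than `n / M ≤ n / 2` apart, and there Jordan's inequality `2θ/π ≤ sin θ ≤ θ` makes the
chord comparable to `2π |i - j| / n`. So `F` lies between the same-block pairs at index distance
at most `⌊n / (7 S₀)⌋` and those at distance at most `⌊n / (4 S₀)⌋`. The larger set has at most
`2 ⌊n / (4 S₀)⌋` pairs per first index. The smaller one contains, in each of the `M` blocks of
length `B = n / M`, the `(B - K) K` pairs `(r, r + g + 1)` with `r < B - K`, `g < K`, where
`K = ⌊n / (7 S₀)⌋ ≤ B / 7` because `S₀ ≥ M`.
-/

lemma sq_cos_sub_cos_add_sq_sin_sub_sin (a b : ℝ) :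
    (cos a - cos b) ^ 2 + (sin a - sin b) ^ 2 = (2 * sin ((a - b) / 2)) ^ 2 := by
  rw [cos_sub_cos, sin_sub_sin]
  linear_combination (4 * sin ((a - b) / 2) ^ 2) * sin_sq_add_cos_sq ((a + b) / 2)

lemma norm_circlePt_sub (n : ℕ) (i j : Fin n) :
    ‖circlePt n i - circlePt n j‖ = 2 * |sin (π * ((i : ℝ) - j) / n)| := by
  rw [EuclideanSpace.norm_eq, Fin.sum_univ_two]
  simp only [circlePt, WithLp.ofLp_sub, Pi.sub_apply, if_pos, Fin.one_eq_zero_iff,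
    OfNat.ofNat_ne_one, if_false, Real.norm_eq_abs, sq_abs]
  rw [sq_cos_sub_cos_add_sq_sin_sub_sin, sqrt_sq_eq_abs, abs_mul, abs_two]
  congr 3
  ring

lemma norm_circlePt_sub_le (n : ℕ) (i j : Fin n) :
    ‖circlePt n i - circlePt n j‖ ≤ 2 * π * |(i : ℝ) - j| / n := by
  rw [norm_circlePt_sub]
  calc 2 * |sin (π * ((i : ℝ) - j) / n)| ≤ 2 * |π * ((i : ℝ) - j) / n| :=
        mul_le_mul_of_nonneg_left abs_sin_le_abs zero_le_two
    _ = 2 * π * |(i : ℝ) - j| / n := by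
        rw [abs_div, abs_mul, abs_of_pos pi_pos, Nat.abs_cast]; ring

lemma four_mul_div_le_norm_circlePt_sub {n : ℕ} {i j : Fin n} (h : 2 * |(i : ℝ) - j| ≤ n) :
    4 * |(i : ℝ) - j| / n ≤ ‖circlePt n i - circlePt n j‖ := by
  have hn : (0 : ℝ) < n := by exact_mod_cast i.pos
  have habs : |π * ((i : ℝ) - j) / n| = π * |(i : ℝ) - j| / n := by
    rw [abs_div, abs_mul, abs_of_pos pi_pos, Nat.abs_cast]
  have hangle : |π * ((i : ℝ) - j) / n| ≤ π / 2 := by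
    rw [habs, div_le_div_iff₀ hn two_pos]; nlinarith [pi_pos]
  rw [norm_circlePt_sub]
  calc 4 * |(i : ℝ) - j| / n = 2 * (2 / π * |π * ((i : ℝ) - j) / n|) := by
        rw [habs]; field_simp; ring
    _ ≤ 2 * |sin (π * ((i : ℝ) - j) / n)| := by gcongr; exact mul_abs_le_abs_sin hangle

lemma abs_sub_lt_of_sameBlock {n M : ℕ} {i j : Fin n} (hB : 0 < n / M)
    (h : sameBlock n M i j) : |(i : ℤ) - j| < (n / M : ℕ) := by
  have hi := Nat.div_add_mod i (n / M)
  have hj := Nat.div_add_mod j (n / M)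
  have hri := Nat.mod_lt i hB
  have hrj := Nat.mod_lt j hB
  rw [sameBlock] at h
  rw [h] at hi
  rw [abs_lt]
  constructor <;> omega

def nearSameBlockPairs (n M K : ℕ) : Finset (Fin n × Fin n) :=
  univ.filter fun p => p.1 ≠ p.2 ∧ sameBlock n M p.1 p.2 ∧ |(p.1 : ℤ) - p.2| ≤ K

lemma card_filter_fst_eq_nearSameBlockPairs_le (n M K : ℕ) (i : Fin n) :
    #{p ∈ nearSameBlockPairs n M K | p.1 = i} ≤ 2 * K := by
  calc #{p ∈ nearSameBlockPairs n M K | p.1 = i}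
      ≤ #((Icc (-K : ℤ) K).erase 0) := by
        refine card_le_card_of_injOn (fun p => (p.2 : ℤ) - i) (fun p hp => ?_)
          (fun p hp q hq h => ?_)
        · simp only [nearSameBlockPairs, mem_coe, mem_filter, mem_univ, true_and] at hp
          obtain ⟨⟨hne, -, hK⟩, rfl⟩ := hp
          have : (p.2 : ℕ) ≠ p.1 := fun h => hne (Fin.ext h.symm)
          simp only [mem_coe, mem_erase, mem_Icc]
          rw [abs_le] at hK
          omega
        · simp only [mem_coe, mem_filter] at hp hq
          exact Prod.ext (hp.2.trans hq.2.symm) (Fin.ext (by simpa [hp.2, hq.2] using h))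
    _ = 2 * K := by
        rw [card_erase_of_mem (by simp), Int.card_Icc]
        omega

lemma card_nearSameBlockPairs_le (n M K : ℕ) : #(nearSameBlockPairs n M K) ≤ 2 * K * n := by
  simpa using card_le_mul_card_image_of_maps_to (f := Prod.fst) (t := univ)
    (fun _ _ => mem_univ _) _ (fun i _ => card_filter_fst_eq_nearSameBlockPairs_le n M K i)

lemma add_mul_div_of_lt {B r : ℕ} (b : ℕ) (hr : r < B) : (r + B * b) / B = b := by
  rw [Nat.add_mul_div_left _ _ (by omega), Nat.div_eq_of_lt hr, zero_add]

lemma le_card_nearSameBlockPairs {n M K : ℕ} (hMn : M ∣ n) (hK : K ≤ n / M) :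
    M * ((n / M - K) * K) ≤ #(nearSameBlockPairs n M K) := by
  set B := n / M
  have hBM : B * M = n := Nat.div_mul_cancel hMn
  have hlt {b r : ℕ} (hb : b < M) (hr : r < B) : r + B * b < n := by
    rw [← hBM]; nlinarith
  let f : Fin M × Fin (B - K) × Fin K → Fin n × Fin n := fun t =>
    (⟨t.2.1 + B * t.1, hlt t.1.2 (by omega)⟩,
      ⟨t.2.1 + t.2.2 + 1 + B * t.1, hlt t.1.2 (by omega)⟩)
  calc M * ((B - K) * K) = #(univ : Finset (Fin M × Fin (B - K) × Fin K)) := by simp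
    _ ≤ #(nearSameBlockPairs n M K) := by
      refine card_le_card_of_injOn f (fun t _ => ?_) (fun t _ t' _ h => ?_)
      · obtain ⟨b, r, g⟩ := t
        simp only [f, nearSameBlockPairs, mem_coe, mem_filter, mem_univ, true_and, ne_eq,
          Fin.ext_iff, sameBlock]
        refine ⟨by omega, ?_, ?_⟩
        · rw [add_mul_div_of_lt _ (by omega), add_mul_div_of_lt _ (by omega)]
        · push_cast; rw [abs_le]; constructor <;> omega
      · obtain ⟨b, r, g⟩ := t
        obtain ⟨b', r', g'⟩ := t'
        simp only [f, Prod.mk.injEq, Fin.ext_iff] at h ⊢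
        obtain ⟨h₁, h₂⟩ := h
        have hb : (b : ℕ) = b' := by
          rw [← add_mul_div_of_lt (b : ℕ) (show (r : ℕ) < B by omega), h₁,
            add_mul_div_of_lt _ (show (r' : ℕ) < B by omega)]
        rw [hb] at h₁ h₂
        omega

lemma closeSameBlockPairs_subset_nearSameBlockPairs {n M : ℕ} {S₀ : ℝ} (hM : 2 ≤ M) (hMn : M ≤ n)
    (hS : 0 < S₀) : closeSameBlockPairs n M S₀ ⊆ nearSameBlockPairs n M ⌊n / (4 * S₀)⌋₊ := by
  intro p hp
  simp only [closeSameBlockPairs, nearSameBlockPairs, mem_filter, mem_univ, true_and] at hp ⊢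
  obtain ⟨hne, hblk, hclose⟩ := hp
  refine ⟨hne, hblk, ?_⟩
  have hn : (0 : ℝ) < n := by exact_mod_cast p.1.pos
  have hdist : 2 * |(p.1 : ℤ) - p.2| ≤ n := by
    have := abs_sub_lt_of_sameBlock (Nat.div_pos hMn (by omega)) hblk
    have := Nat.mul_div_le n M
    have : 2 * (n / M) ≤ M * (n / M) := Nat.mul_le_mul_right _ hM
    omega
  have hchord := four_mul_div_le_norm_circlePt_sub (i := p.1) (j := p.2) (by exact_mod_cast hdist)
  rw [Int.natCast_floor_eq_floor (by positivity), Int.le_floor, le_div_iff₀ (by positivity)]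
  push_cast
  rw [div_le_iff₀ hn] at hchord
  nlinarith

lemma nearSameBlockPairs_subset_closeSameBlockPairs {n M K : ℕ} {S₀ : ℝ} (hS : 0 ≤ S₀)
    (hK : 2 * π * S₀ * K ≤ n) : nearSameBlockPairs n M K ⊆ closeSameBlockPairs n M S₀ := by
  intro p hp
  simp only [closeSameBlockPairs, nearSameBlockPairs, mem_filter, mem_univ, true_and] at hp ⊢
  obtain ⟨hne, hblk, hnear⟩ := hp
  refine ⟨hne, hblk, ?_⟩
  have hn : (0 : ℝ) < n := by exact_mod_cast p.1.pos
  have hnear' : |(p.1 : ℝ) - p.2| ≤ K := by exact_mod_cast hnear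
  calc S₀ * ‖circlePt n p.1 - circlePt n p.2‖ ≤ S₀ * (2 * π * |(p.1 : ℝ) - p.2| / n) :=
        mul_le_mul_of_nonneg_left (norm_circlePt_sub_le n p.1 p.2) hS
    _ ≤ S₀ * (2 * π * K / n) := by gcongr
    _ ≤ 1 := by rw [← mul_div_assoc, div_le_one hn]; linarith

lemma card_closeSameBlockPairs_le {n M : ℕ} {S₀ : ℝ} (hM : 2 ≤ M) (hMn : M ≤ n) (hS : 0 < S₀) :
    (#(closeSameBlockPairs n M S₀) : ℝ) ≤ n ^ 2 / (2 * S₀) := by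
  set K := ⌊(n : ℝ) / (4 * S₀)⌋₊
  have hK : (K : ℝ) ≤ n / (4 * S₀) := Nat.floor_le (by positivity)
  calc (#(closeSameBlockPairs n M S₀) : ℝ) ≤ #(nearSameBlockPairs n M K) := by
        exact_mod_cast card_le_card (closeSameBlockPairs_subset_nearSameBlockPairs hM hMn hS)
    _ ≤ 2 * K * n := by exact_mod_cast card_nearSameBlockPairs_le n M K
    _ ≤ 2 * (n / (4 * S₀)) * n := by gcongr
    _ = n ^ 2 / (2 * S₀) := by field_simp; ring

lemma le_card_closeSameBlockPairs {n M : ℕ} {S₀ : ℝ} (hM : 0 < M) (hMn : M ∣ n)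
    (hMS : M ≤ S₀) (hSn : S₀ ≤ n / 10) :
    n ^ 2 / (30 * S₀) ≤ (#(closeSameBlockPairs n M S₀) : ℝ) := by
  have hS : 0 < S₀ := lt_of_lt_of_le (by exact_mod_cast hM) hMS
  set B := n / M
  set K := ⌊(n : ℝ) / (7 * S₀)⌋₊
  have hBM : (B : ℝ) * M = n := by exact_mod_cast Nat.div_mul_cancel hMn
  have hK_le : (K : ℝ) ≤ n / (7 * S₀) := Nat.floor_le (by positivity)
  have hKB : (K : ℝ) ≤ B / 7 := by
    calc (K : ℝ) ≤ n / (7 * S₀) := hK_le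
      _ ≤ n / (7 * M) := by gcongr
      _ = B / 7 := by rw [← hBM]; field_simp
  have hKB_nat : K ≤ B := by
    have : (K : ℝ) ≤ B := hKB.trans (by linarith [(B.cast_nonneg : (0 : ℝ) ≤ B)])
    exact_mod_cast this
  -- `n / (7 S₀) ≥ 10 / 7`, so rounding down loses at most a fixed fraction
  have hK_ge : 3 * n ≤ 70 * S₀ * K := by
    have := Nat.sub_one_lt_floor ((n : ℝ) / (7 * S₀))
    have : (10 : ℝ) / 7 ≤ n / (7 * S₀) := by rw [le_div_iff₀ (by positivity)]; linarith
    calc 3 * (n : ℝ) = 70 * S₀ * (3 / 10 * (n / (7 * S₀))) := by field_simp; ring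
      _ ≤ 70 * S₀ * K := by gcongr; linarith
  have hsub : nearSameBlockPairs n M K ⊆ closeSameBlockPairs n M S₀ := by
    refine nearSameBlockPairs_subset_closeSameBlockPairs hS.le ?_
    calc 2 * π * S₀ * K ≤ 7 * S₀ * K := by gcongr; linarith [pi_lt_d2]
      _ = K * (7 * S₀) := by ring
      _ ≤ n := by rwa [le_div_iff₀ (by positivity)] at hK_le
  calc n ^ 2 / (30 * S₀) ≤ 6 / 7 * n * K := by
        rw [div_le_iff₀ (by positivity)]
        nlinarith
    _ ≤ M * ((B - K) * K) := by
        have : 0 ≤ (M : ℝ) * K * (B / 7 - K) := mul_nonneg (by positivity) (sub_nonneg.2 hKB)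
        have : (M : ℝ) * ((B - K) * K) - 6 / 7 * n * K = M * K * (B / 7 - K) := by
          rw [← hBM]; ring
        linarith
    _ = ((M * ((B - K) * K) : ℕ) : ℝ) := by
        rw [Nat.cast_mul, Nat.cast_mul, Nat.cast_sub hKB_nat]
    _ ≤ #(closeSameBlockPairs n M S₀) := by
        exact_mod_cast (le_card_nearSameBlockPairs hMn hKB_nat).trans (card_le_card hsub)

/-- For the discrete circle `P_n` partitioned into `M` blocks of consecutive
indices and `F = {(k,ℓ) : k ≠ ℓ, x_k ∼ x_ℓ, S₀‖x_k−x_ℓ‖ ≤ 1}`, there exist constants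
`c₁, C₁ > 0` and `N` such that for all `n ≥ N`, all `M ∣ n` with `M ≥ 3`, and all `S₀` with
`M ≤ S₀ ≤ n/10`, one has `c₁·n²/S₀ ≤ |F| ≤ C₁·n²/S₀`. -/
theorem stmt10 :
    ∃ c₁ C₁ : ℝ, 0 < c₁ ∧ 0 < C₁ ∧ ∃ N : ℕ, ∀ n : ℕ, N ≤ n →
      ∀ M : ℕ, 3 ≤ M → M ∣ n →
      ∀ S₀ : ℝ, (M : ℝ) ≤ S₀ → S₀ ≤ (n : ℝ) / 10 →
        c₁ * ((n : ℝ) ^ 2 / S₀) ≤ ((closeSameBlockPairs n M S₀).card : ℝ) ∧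
        ((closeSameBlockPairs n M S₀).card : ℝ) ≤ C₁ * ((n : ℝ) ^ 2 / S₀) := by
  refine ⟨1 / 30, 1 / 2, by norm_num, by norm_num, 0, fun n _ M hM hMn S₀ hMS hSn => ?_⟩
  have hS : 0 < S₀ := lt_of_lt_of_le (by exact_mod_cast (by omega : 0 < M)) hMS
  have hMn' : M ≤ n := by
    have : (M : ℝ) ≤ n := by linarith
    exact_mod_cast this
  constructor
  · calc 1 / 30 * ((n : ℝ) ^ 2 / S₀) = n ^ 2 / (30 * S₀) := by ring
      _ ≤ _ := le_card_closeSameBlockPairs (by omega) hMn hMS hSn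
  · calc _ ≤ (n : ℝ) ^ 2 / (2 * S₀) := card_closeSameBlockPairs_le (by omega) hMn' hS
      _ = 1 / 2 * ((n : ℝ) ^ 2 / S₀) := by ring
end

section
/- There exist a constant C > 0 and N such that for all n ≥ N and all S ≥ 1, Σ ‖x_k−x_ℓ‖^{−2} ≤ C·n²·S, where the sum ranges over all ordered pairs of distinct indices k, ℓ ∈ {1,…,n} with S·‖x_k−x_ℓ‖ > 1 and x_i are the points of the discrete circle P_n. -/
open Real Finset

/-!
The pair sum is rotation invariant: it is `n` times the sum over the chords
`‖x_j - x_0‖ = 2 sin (π j / n)`, `0 < j < n`. For `m = min j (n - j)`, Jordan's inequality gives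
`4 m / n ≤ 2 sin (π j / n) ≤ 2 π m / n`, so the constraint `S ‖x_j - x_0‖ > 1` forces
`m > M := n / (2 π S)` and bounds the term by `n² / (16 m²)`. As `∑_{m > M} m⁻² ≤ 2 / M` and
each `m` arises from at most two `j`, the inner sum is at most `π n S / 2`, and the whole sum is
at most `π n² S / 2`.
-/
theorem Fintype.sum_prod_sub {G M : Type*} [AddCommGroup G] [Fintype G] [AddCommMonoid M]
    (f : G → M) : ∑ p : G × G, f (p.1 - p.2) = Fintype.card G • ∑ g, f g := by
  rw [Fintype.sum_prod_type]
  simp_rw [fun k => Fintype.sum_equiv (Equiv.subLeft k) (fun l => f (k - l)) f (fun _ => rfl)]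
  rw [Finset.sum_const, Finset.card_univ]

noncomputable def invSqAbove (M : ℝ) (m : ℕ) : ℝ := if M < m then ((m : ℝ) ^ 2)⁻¹ else 0

lemma invSqAbove_nonneg (M : ℝ) (m : ℕ) : 0 ≤ invSqAbove M m := by
  unfold invSqAbove; split_ifs <;> positivity

lemma sum_invSqAbove_le {M : ℝ} (hM : 0 < M) (s : Finset ℕ) :
    ∑ m ∈ s, invSqAbove M m ≤ 2 / M := by
  obtain ⟨N, hN⟩ := s.bddAbove
  calc ∑ m ∈ s, invSqAbove M m
      = ∑ m ∈ s.filter (fun m : ℕ => M < m), ((m : ℝ) ^ 2)⁻¹ := by rw [sum_filter]; rfl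
    _ ≤ ∑ m ∈ Ioo ⌊M⌋₊ (N + 1), ((m : ℝ) ^ 2)⁻¹ := by
        refine sum_le_sum_of_subset_of_nonneg (fun m hm => ?_) (fun _ _ _ => by positivity)
        rw [mem_filter] at hm
        rw [mem_Ioo, Nat.floor_lt hM.le, Nat.lt_succ_iff]
        exact ⟨hm.2, hN hm.1⟩
    _ ≤ 2 / ((⌊M⌋₊ : ℝ) + 1) := sum_Ioo_inv_sq_le _ _
    _ ≤ 2 / M := div_le_div_of_nonneg_left zero_le_two hM (Nat.lt_floor_add_one M).le

lemma norm_circlePt_sub_sq (n : ℕ) (k l : Fin n) :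
    ‖circlePt n k - circlePt n l‖ ^ 2 = 2 - 2 * cos (2 * π * ((k : ℝ) - l) / n) := by
  rw [EuclideanSpace.norm_sq_eq, Fin.sum_univ_two]
  simp only [circlePt, PiLp.sub_apply, Fin.isValue, if_true, one_ne_zero, if_false,
    Real.norm_eq_abs, sq_abs]
  rw [mul_sub, sub_div, cos_sub]
  linear_combination (sin_sq_add_cos_sq (2 * π * k / n)) + sin_sq_add_cos_sq (2 * π * l / n)

lemma norm_circlePt_sub_eq_norm_sub_zero (n : ℕ) [NeZero n] (k l : Fin n) :
    ‖circlePt n k - circlePt n l‖ = ‖circlePt n (k - l) - circlePt n 0‖ := by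
  rw [← sq_eq_sq₀ (norm_nonneg _) (norm_nonneg _), norm_circlePt_sub_sq, norm_circlePt_sub_sq]
  rcases le_or_gt l k with hlk | hkl
  · rw [Fin.coe_sub_iff_le.mpr hlk, Nat.cast_sub hlk]
    simp
  · have hn : (n : ℝ) ≠ 0 := NeZero.ne _
    rw [Fin.coe_sub_iff_lt.mpr hkl, Nat.cast_sub (by omega), Nat.cast_add]
    rw [show 2 * π * ((n + k - l : ℝ) - (0 : Fin n).val) / n = 2 * π * ((k : ℝ) - l) / n + 2 * π by
      simp only [Fin.coe_ofNat_eq_mod, Nat.zero_mod, CharP.cast_eq_zero, sub_zero]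
      field_simp; ring, cos_add_two_pi]

lemma norm_circlePt_sub_zero (n : ℕ) [NeZero n] (j : Fin n) :
    ‖circlePt n j - circlePt n 0‖ = 2 * sin (π * j / n) := by
  have hsin : 0 ≤ sin (π * j / n) := by
    apply sin_nonneg_of_nonneg_of_le_pi (by positivity)
    rw [div_le_iff₀ (by exact_mod_cast Nat.pos_of_neZero n)]
    have : (j : ℝ) ≤ n := by exact_mod_cast j.isLt.le
    nlinarith [pi_pos]
  rw [← sq_eq_sq₀ (norm_nonneg _) (by positivity), norm_circlePt_sub_sq,
    show 2 * π * ((j : ℝ) - (0 : Fin n).val) / n = 2 * (π * j / n) by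
      simp only [Fin.coe_ofNat_eq_mod, Nat.zero_mod, CharP.cast_eq_zero, sub_zero]; ring,
    cos_two_mul]
  linear_combination -4 * sin_sq_add_cos_sq (π * j / n)

lemma inv_sq_chord_le {n m : ℕ} {S : ℝ} (hS : 0 < S) (hm : 0 < m) (hmn : 2 * m ≤ n)
    (h : 1 < S * (2 * sin (π * m / n))) :
    ((2 * sin (π * m / n)) ^ 2)⁻¹ ≤ (n : ℝ) ^ 2 / 16 * invSqAbove (n / (2 * π * S)) m := by
  have hn : (0 : ℝ) < n := by exact_mod_cast (show 0 < n by omega)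
  have hmn' : 2 * (m : ℝ) ≤ n := by exact_mod_cast hmn
  have hθ : π * m / n ≤ π / 2 := by
    rw [div_le_div_iff₀ hn two_pos]; nlinarith [pi_pos]
  have hlow : 2 * m / n ≤ sin (π * m / n) :=
    calc 2 * (m : ℝ) / n = 2 / π * (π * m / n) := by field_simp
      _ ≤ _ := mul_le_sin (by positivity) hθ
  have hup : sin (π * m / n) ≤ π * m / n := sin_le (by positivity)
  have hM : n / (2 * π * S) < m := by
    rw [div_lt_iff₀ (by positivity)]
    have := (lt_of_lt_of_le h (by gcongr)).trans_eq
      (show S * (2 * (π * m / n)) = m * (2 * π * S) / n by ring)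
    rwa [lt_div_iff₀ hn, one_mul] at this
  rw [invSqAbove, if_pos hM]
  calc ((2 * sin (π * m / n)) ^ 2)⁻¹ ≤ ((2 * (2 * (m : ℝ) / n)) ^ 2)⁻¹ := by gcongr
    _ = n ^ 2 / 16 * ((m : ℝ) ^ 2)⁻¹ := by field_simp; ring

lemma inv_sq_chord_le_add {n j : ℕ} {S : ℝ} (hS : 0 < S) (hj : 0 < j) (hjn : j < n)
    (h : 1 < S * (2 * sin (π * j / n))) :
    ((2 * sin (π * j / n)) ^ 2)⁻¹ ≤
      (n : ℝ) ^ 2 / 16 *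
        (invSqAbove (n / (2 * π * S)) j + invSqAbove (n / (2 * π * S)) (n - j)) := by
  have hw := invSqAbove_nonneg (n / (2 * π * S))
  rcases le_total (2 * j) n with hjn' | hjn'
  · exact (inv_sq_chord_le hS hj hjn' h).trans
      (mul_le_mul_of_nonneg_left (le_add_of_nonneg_right (hw _)) (by positivity))
  · have hsym : sin (π * j / n) = sin (π * ((n - j : ℕ) : ℝ) / n) := by
      have hn : (n : ℝ) ≠ 0 := by exact_mod_cast (show n ≠ 0 by omega)
      rw [Nat.cast_sub hjn.le, ← sin_pi_sub]
      congr 1; field_simp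
    rw [hsym] at h ⊢
    exact (inv_sq_chord_le hS (by omega) (by omega) h).trans
      (mul_le_mul_of_nonneg_left (le_add_of_nonneg_left (hw _)) (by positivity))

lemma sum_inv_sq_chord_le {n : ℕ} (hn : 0 < n) {S : ℝ} (hS : 0 < S) :
    ∑ j ∈ range n, (if j ≠ 0 ∧ 1 < S * (2 * sin (π * j / n))
      then ((2 * sin (π * j / n)) ^ 2)⁻¹ else 0) ≤ π * n * S / 2 := by
  set M := n / (2 * π * S)
  have hM : 0 < M := by positivity
  have hw := invSqAbove_nonneg M
  calc _ ≤ ∑ j ∈ range n, n ^ 2 / 16 * (invSqAbove M j + invSqAbove M (n - j)) := by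
        refine sum_le_sum fun j hj => ?_
        split_ifs with h
        · exact inv_sq_chord_le_add hS (Nat.pos_of_ne_zero h.1) (mem_range.mp hj) h.2
        · exact mul_nonneg (by positivity) (add_nonneg (hw _) (hw _))
    _ = n ^ 2 / 16 * (∑ j ∈ range n, invSqAbove M j +
          ∑ m ∈ (range n).image (n - ·), invSqAbove M m) := by
        rw [← mul_sum, sum_add_distrib, sum_image]
        intro a ha b hb (hab : n - a = n - b)
        simp only [coe_range, Set.mem_Iio] at ha hb
        omega
    _ ≤ n ^ 2 / 16 * (2 / M + 2 / M) := by
        gcongr <;> exact sum_invSqAbove_le hM _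
    _ = π * n * S / 2 := by
        have : (n : ℝ) ≠ 0 := by positivity
        simp only [M]; field_simp; ring

/-- There exist a constant `C > 0` and `N` such that for all `n ≥ N` and all
`S ≥ 1`, `Σ ‖x_k − x_ℓ‖⁻² ≤ C·n²·S`, the sum over all ordered pairs of distinct indices
with `S·‖x_k − x_ℓ‖ > 1`. -/
theorem stmt11 :
    ∃ C : ℝ, 0 < C ∧ ∃ N : ℕ, ∀ n : ℕ, N ≤ n → ∀ S : ℝ, 1 ≤ S →
      (∑ p ∈ Finset.univ.filter (fun p : Fin n × Fin n =>
          p.1 ≠ p.2 ∧ 1 < S * ‖circlePt n p.1 - circlePt n p.2‖),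
        (‖circlePt n p.1 - circlePt n p.2‖ ^ 2)⁻¹) ≤ C * (n : ℝ) ^ 2 * S := by
  refine ⟨2, two_pos, 1, fun n hn S hS => ?_⟩
  have : NeZero n := ⟨by omega⟩
  set f : Fin n → ℝ := fun j => if j ≠ 0 ∧ 1 < S * ‖circlePt n j - circlePt n 0‖
    then (‖circlePt n j - circlePt n 0‖ ^ 2)⁻¹ else 0
  have hrot : ∀ p : Fin n × Fin n, (if p.1 ≠ p.2 ∧ 1 < S * ‖circlePt n p.1 - circlePt n p.2‖
      then (‖circlePt n p.1 - circlePt n p.2‖ ^ 2)⁻¹ else 0) = f (p.1 - p.2) := fun p => by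
    simp only [f, sub_ne_zero]
    rw [norm_circlePt_sub_eq_norm_sub_zero n p.1 p.2]
  have hf : ∑ j, f j = ∑ j ∈ range n, (if j ≠ 0 ∧ 1 < S * (2 * sin (π * j / n))
      then ((2 * sin (π * j / n)) ^ 2)⁻¹ else 0) := by
    rw [← Fin.sum_univ_eq_sum_range]
    simp only [f, norm_circlePt_sub_zero, ne_eq, Fin.ext_iff, Fin.val_zero]
  calc _ = n • ∑ j, f j := by
        rw [sum_filter, Fintype.sum_congr _ _ hrot, Fintype.sum_prod_sub, Fintype.card_fin]
    _ ≤ n * (π * n * S / 2) := by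
        rw [nsmul_eq_mul, hf]
        gcongr
        exact sum_inv_sq_chord_le (by omega) (by linarith)
    _ ≤ 2 * n ^ 2 * S := by
        have : 0 ≤ (n : ℝ) ^ 2 * S := by positivity
        nlinarith [pi_lt_four]
end

section
/- Consider the discrete circle P_n partitioned into M blocks of consecutive indices, and for S_0 > 0 let E_1 = Σ_{(k,ℓ): k≠ℓ, x_k∼x_ℓ} 1/(1+S_0²‖x_k−x_ℓ‖²). There exist constants c_1, C_1 > 0 and N such that for all n ≥ N, all M dividing n with M ≥ 3, and all S_0 with M ≤ S_0 ≤ n/10, one has c_1·n²/S_0 ≤ E_1 ≤ C_1·n²/S_0. -/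
/-!
A same-block pair at index distance `d` has weight `w(d) = 1 / (1 + 4 S₀² sin² (π d / n))`, and
writing `n = M L`, each of the `M` blocks contributes `2 ∑_{u < L} ∑_{1 ≤ d ≤ u} w(d)`.
Jordan's inequality gives `w(d) ≤ 1 / (1 + (4 S₀ d / n)²)`, whose sum over `d ≥ 1` telescopes to
at most `n / (2 S₀)`; hence `E₁ ≤ n² / S₀`. Conversely `w(d) ≥ 1/2` as long as `2π S₀ d ≤ n`, so all
`d ≤ D = ⌊n / (7 S₀)⌋ ≤ L / 7` count, and every block has at least `(L - D) D` such pairs in each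
orientation; hence `E₁ ≥ (3/49) n² / S₀`.
-/

open Real Finset

/-- `E₁ = Σ_{(k,ℓ): k≠ℓ, x_k ∼ x_ℓ} 1/(1 + S₀²‖x_k − x_ℓ‖²)`,
the sum over ordered same-block pairs of distinct indices. -/
noncomputable def E1 (n M : ℕ) (S₀ : ℝ) : ℝ :=
  ∑ p ∈ Finset.univ.filter
      (fun p : Fin n × Fin n => p.1 ≠ p.2 ∧ sameBlock n M p.1 p.2),
    (1 + S₀ ^ 2 * ‖circlePt n p.1 - circlePt n p.2‖ ^ 2)⁻¹

lemma circlePt_dist_sq (n : ℕ) (i j : Fin n) :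
    ‖circlePt n i - circlePt n j‖ ^ 2 = 4 * sin (π * ((i : ℝ) - j) / n) ^ 2 := by
  rw [EuclideanSpace.real_norm_sq_eq, Fin.sum_univ_two]
  simp only [circlePt, PiLp.sub_apply, if_pos, if_neg (show (1 : Fin 2) ≠ 0 by decide)]
  rw [show π * ((i : ℝ) - j) / n = (2 * π * i / n - 2 * π * j / n) / 2 by ring,
    sin_sq_eq_half_sub, mul_div_cancel₀ _ two_ne_zero, cos_sub]
  nlinarith [sin_sq_add_cos_sq (2 * π * i / n), sin_sq_add_cos_sq (2 * π * j / n)]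

noncomputable def circleWeight (n : ℕ) (S₀ t : ℝ) : ℝ :=
  (1 + S₀ ^ 2 * (4 * sin (π * t / n) ^ 2))⁻¹

lemma circleWeight_pos (n : ℕ) (S₀ t : ℝ) : 0 < circleWeight n S₀ t := by
  unfold circleWeight; positivity

lemma circleWeight_neg (n : ℕ) (S₀ t : ℝ) : circleWeight n S₀ (-t) = circleWeight n S₀ t := by
  simp only [circleWeight, mul_neg, neg_div, sin_neg, neg_sq]

lemma circleWeight_le {n : ℕ} (hn : 0 < n) (S₀ : ℝ) {t : ℝ} (ht : 0 ≤ t) (htn : 2 * t ≤ n) :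
    circleWeight n S₀ t ≤ (1 + (4 * S₀ * t / n) ^ 2)⁻¹ := by
  have hn' : (0 : ℝ) < n := Nat.cast_pos.mpr hn
  have hjordan : 2 / π * (π * t / n) ≤ sin (π * t / n) :=
    mul_le_sin (by positivity) (by rw [div_le_div_iff₀ hn' two_pos]; nlinarith [pi_pos])
  have hsin : 2 * t / n ≤ sin (π * t / n) := by
    convert hjordan using 1; field_simp
  apply inv_anti₀ (by positivity)
  have := pow_le_pow_left₀ (by positivity) hsin 2
  calc 1 + (4 * S₀ * t / n) ^ 2 = 1 + S₀ ^ 2 * (4 * (2 * t / n) ^ 2) := by ring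
    _ ≤ 1 + S₀ ^ 2 * (4 * sin (π * t / n) ^ 2) := by gcongr

lemma half_le_circleWeight (n : ℕ) {S₀ t : ℝ} (hS : 0 ≤ S₀) (ht : 0 ≤ t)
    (h : 2 * π * S₀ * t ≤ n) : 1 / 2 ≤ circleWeight n S₀ t := by
  have hsmall : S₀ ^ 2 * (4 * sin (π * t / n) ^ 2) ≤ 1 :=
    calc S₀ ^ 2 * (4 * sin (π * t / n) ^ 2) ≤ S₀ ^ 2 * (4 * (π * t / n) ^ 2) := by
          gcongr S₀ ^ 2 * (4 * ?_); exact sin_sq_le_sq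
      _ = (2 * π * S₀ * t / n) ^ 2 := by ring
      _ ≤ 1 := pow_le_one₀ (by positivity) (div_le_one_of_le₀ h (Nat.cast_nonneg n))
  rw [circleWeight, one_div]
  exact inv_anti₀ (by positivity) (by linarith)

lemma sum_range_inv_one_add_sq_le {a : ℝ} (ha : 0 < a) (K : ℕ) :
    ∑ d ∈ range K, (1 + (a * (d + 1)) ^ 2)⁻¹ ≤ 2 / a := by
  -- `G` is a telescoping majorant because `(1 + y) (1 + x) ≤ 2 (1 + x²)` for `0 ≤ y ≤ x`
  set G : ℕ → ℝ := fun d => (a * (1 + a * d))⁻¹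
  have hstep (d : ℕ) : (1 + (a * (d + 1)) ^ 2)⁻¹ ≤ 2 * (G d - G (d + 1)) := by
    have hd : (0 : ℝ) ≤ a * d := by positivity
    have hGd : G d - G (d + 1) = ((1 + a * d) * (1 + a * (d + 1)))⁻¹ := by
      simp only [G]; push_cast; field_simp; ring
    rw [hGd, ← div_eq_mul_inv, inv_eq_one_div, div_le_div_iff₀ (by positivity) (by positivity)]
    nlinarith [sq_nonneg (1 - a * (d + 1))]
  calc ∑ d ∈ range K, (1 + (a * (d + 1)) ^ 2)⁻¹ ≤ ∑ d ∈ range K, 2 * (G d - G (d + 1)) :=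
        sum_le_sum fun d _ => hstep d
    _ = 2 * (G 0 - G K) := by rw [← mul_sum, sum_range_sub']
    _ ≤ 2 / a := by
        have : 0 ≤ G K := by positivity
        simp only [G, Nat.cast_zero, mul_zero, add_zero, mul_one] at this ⊢
        rw [div_eq_mul_inv]; linarith

lemma sum_range_offDiag_eq {R : Type*} [AddCommMonoid R] (f : ℤ → R) (L : ℕ) :
    ∑ u ∈ range L, ∑ v ∈ range L, (if u = v then 0 else f (u - v)) =
      ∑ u ∈ range L, ∑ d ∈ range u, (f (d + 1) + f (-(d + 1))) := by
  induction L with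
  | zero => simp
  | succ L ih =>
    have hreflect : ∑ v ∈ range L, f ((L : ℤ) - v) = ∑ d ∈ range L, f (d + 1) := by
      rw [← sum_range_reflect]
      refine sum_congr rfl fun d hd => ?_
      have := mem_range.mp hd
      congr 1; omega
    have hrow : ∑ u ∈ range L, (if u = L then 0 else f ((u : ℤ) - L)) =
        ∑ d ∈ range L, f (-(d + 1)) := by
      rw [← sum_range_reflect]
      refine sum_congr rfl fun d hd => ?_
      have := mem_range.mp hd
      rw [if_neg (by omega)]
      congr 1; omega
    have hcol : ∑ v ∈ range L, (if L = v then 0 else f ((L : ℤ) - v)) =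
        ∑ v ∈ range L, f ((L : ℤ) - v) :=
      sum_congr rfl fun v hv => if_neg (by have := mem_range.mp hv; omega)
    simp only [sum_range_succ, sum_add_distrib, ih, hrow, hcol, hreflect]
    ac_rfl

lemma sum_range_sum_range_le {R : Type*} [AddCommMonoid R] [PartialOrder R]
    [IsOrderedAddMonoid R] {g : ℕ → R} (hg : ∀ d, 0 ≤ g d) (L : ℕ) :
    ∑ u ∈ range L, ∑ d ∈ range u, g d ≤ L • ∑ d ∈ range L, g d := by
  calc ∑ u ∈ range L, ∑ d ∈ range u, g d ≤ ∑ _u ∈ range L, ∑ d ∈ range L, g d :=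
        sum_le_sum fun u hu => sum_le_sum_of_subset_of_nonneg
          (range_subset_range.mpr (mem_range.mp hu).le) fun d _ _ => hg d
    _ = L • ∑ d ∈ range L, g d := by rw [sum_const, card_range]

lemma le_sum_range_sum_range {R : Type*} [AddCommMonoid R] [PartialOrder R]
    [IsOrderedAddMonoid R] {g : ℕ → R} (hg : ∀ d, 0 ≤ g d) (D L : ℕ) :
    (L - D) • ∑ d ∈ range D, g d ≤ ∑ u ∈ range L, ∑ d ∈ range u, g d := by
  rw [← Nat.card_Ico D L, ← sum_const]
  calc ∑ u ∈ Ico D L, ∑ d ∈ range D, g d ≤ ∑ u ∈ Ico D L, ∑ d ∈ range u, g d :=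
        sum_le_sum fun u hu =>
          sum_le_sum_of_subset_of_nonneg (range_subset_range.mpr (mem_Ico.mp hu).1)
            fun d _ _ => hg d
    _ ≤ ∑ u ∈ range L, ∑ d ∈ range u, g d :=
        sum_le_sum_of_subset_of_nonneg (fun u hu => mem_range.mpr (mem_Ico.mp hu).2)
          fun u _ _ => sum_nonneg fun d _ => hg d

lemma sameBlock_finProdFinEquiv {M L : ℕ} (hM : 0 < M) (x y : Fin M × Fin L) :
    sameBlock (M * L) M (finProdFinEquiv x) (finProdFinEquiv y) ↔ x.1 = y.1 := by
  have hL : 0 < L := x.2.pos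
  have hdiv (z : Fin M × Fin L) : (z.2 + L * z.1 : ℕ) / L = z.1 := by
    rw [Nat.add_mul_div_left _ _ hL, Nat.div_eq_of_lt z.2.isLt, zero_add]
  rw [sameBlock, Nat.mul_div_cancel_left L hM, finProdFinEquiv_apply_val,
    finProdFinEquiv_apply_val, hdiv, hdiv, Fin.val_inj]

lemma sum_sameBlock_eq {R : Type*} [AddCommMonoid R] {M : ℕ} (hM : 0 < M) (L : ℕ) (f : ℤ → R) :
    ∑ p ∈ univ.filter (fun p : Fin (M * L) × Fin (M * L) =>
        p.1 ≠ p.2 ∧ sameBlock (M * L) M p.1 p.2), f ((p.1 : ℕ) - (p.2 : ℕ)) =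
      M • ∑ u ∈ range L, ∑ v ∈ range L, (if u = v then 0 else f (u - v)) := by
  have hblock (x y : Fin M × Fin L) :
      (if finProdFinEquiv x ≠ finProdFinEquiv y ∧
          sameBlock (M * L) M (finProdFinEquiv x) (finProdFinEquiv y)
        then f (((finProdFinEquiv x : ℕ) : ℤ) - (finProdFinEquiv y : ℕ)) else 0) =
      if x.1 = y.1 then (if (x.2 : ℕ) = y.2 then 0 else f ((x.2 : ℕ) - (y.2 : ℕ))) else 0 := by
    simp only [sameBlock_finProdFinEquiv hM, finProdFinEquiv_apply_val, ne_eq,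
      finProdFinEquiv.injective.eq_iff]
    obtain ⟨b, u⟩ := x
    obtain ⟨b', v⟩ := y
    by_cases hb : b = b'
    · subst hb
      simp only [Prod.mk.injEq, true_and, and_true, if_true, Fin.val_inj]
      push_cast
      rw [ite_not, add_sub_add_right_eq_sub]
    · simp [hb]
  rw [sum_filter, Fintype.sum_prod_type, ← finProdFinEquiv.sum_comp]
  simp only [← finProdFinEquiv.sum_comp, hblock, Fintype.sum_prod_type, sum_ite_irrel,
    sum_const_zero, sum_ite_eq, mem_univ, if_true, sum_const, card_univ, Fintype.card_fin]
  rw [← Fin.sum_univ_eq_sum_range]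
  simp only [← Fin.sum_univ_eq_sum_range (fun v => if _ = v then 0 else f (_ - v))]

lemma E1_mul_eq {M : ℕ} (hM : 0 < M) (L : ℕ) (S₀ : ℝ) :
    E1 (M * L) M S₀ =
      M * ∑ u ∈ range L, ∑ d ∈ range u, 2 * circleWeight (M * L) S₀ (d + 1) := by
  have hterm (p : Fin (M * L) × Fin (M * L)) :
      (1 + S₀ ^ 2 * ‖circlePt _ p.1 - circlePt _ p.2‖ ^ 2)⁻¹ =
        circleWeight (M * L) S₀ (((p.1 : ℕ) - (p.2 : ℕ) : ℤ)) := by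
    rw [circlePt_dist_sq, circleWeight]; push_cast; rfl
  rw [E1, sum_congr rfl fun p _ => hterm p,
    sum_sameBlock_eq hM L (fun z : ℤ => circleWeight (M * L) S₀ z),
    sum_range_offDiag_eq (fun z : ℤ => circleWeight (M * L) S₀ z),
    nsmul_eq_mul]
  push_cast
  simp only [circleWeight_neg, two_mul]

lemma half_le_natFloor {x : ℝ} (hx : 1 ≤ x) : x / 2 ≤ ⌊x⌋₊ := by
  have h1 : (1 : ℝ) ≤ ⌊x⌋₊ := by exact_mod_cast Nat.one_le_floor_iff x |>.mpr hx
  linarith [Nat.lt_floor_add_one x]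

theorem E1_le {M : ℕ} (hM : 2 ≤ M) {L : ℕ} (hL : 0 < L) {S₀ : ℝ} (hS : 0 < S₀) :
    E1 (M * L) M S₀ ≤ ((M * L : ℕ) : ℝ) ^ 2 / S₀ := by
  set n := M * L with hn_def
  have hn : 0 < n := Nat.mul_pos (by omega) hL
  have hn' : (0 : ℝ) < n := Nat.cast_pos.mpr hn
  set a := 4 * S₀ / n
  have hw (d : ℕ) (hd : d ∈ range L) :
      circleWeight n S₀ (d + 1) ≤ (1 + (a * (d + 1)) ^ 2)⁻¹ := by
    have h2d : 2 * ((d : ℝ) + 1) ≤ n := by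
      have := mem_range.mp hd
      exact_mod_cast (show 2 * (d + 1) ≤ M * L by nlinarith)
    have := circleWeight_le hn S₀ (by positivity) h2d
    rwa [mul_div_right_comm] at this
  calc E1 n M S₀ = M * ∑ u ∈ range L, ∑ d ∈ range u, 2 * circleWeight n S₀ (d + 1) :=
        E1_mul_eq (by omega) L S₀
    _ ≤ M * (L • ∑ d ∈ range L, 2 * circleWeight n S₀ (d + 1)) := by
        gcongr
        exact sum_range_sum_range_le (fun d => (mul_pos two_pos (circleWeight_pos n S₀ _)).le) L
    _ ≤ M * (L * (2 * (2 / a))) := by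
        rw [nsmul_eq_mul, ← mul_sum]
        gcongr
        exact (sum_le_sum hw).trans (sum_range_inv_one_add_sq_le (by positivity) L)
    _ = (n : ℝ) ^ 2 / S₀ := by
        simp only [a, hn_def, Nat.cast_mul]; field_simp; ring

theorem le_E1 {M : ℕ} (hM : 0 < M) {L : ℕ} {S₀ : ℝ} (hMS : (M : ℝ) ≤ S₀)
    (hSn : 7 * S₀ ≤ (M * L : ℕ)) :
    3 / 49 * (((M * L : ℕ) : ℝ) ^ 2 / S₀) ≤ E1 (M * L) M S₀ := by
  set n := M * L with hn_def
  have hM' : (0 : ℝ) < M := Nat.cast_pos.mpr hM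
  have hS : 0 < S₀ := hM'.trans_le hMS
  set D := ⌊(n : ℝ) / (7 * S₀)⌋₊
  have hD_ge : (n : ℝ) / (14 * S₀) ≤ D :=
    calc (n : ℝ) / (14 * S₀) = n / (7 * S₀) / 2 := by ring
      _ ≤ D := half_le_natFloor ((one_le_div (by positivity)).mpr hSn)
  have hD_le : (D : ℝ) ≤ n / (7 * S₀) := Nat.floor_le (by positivity)
  have hDL : 7 * (D : ℝ) ≤ L := by
    have : (n : ℝ) / (7 * S₀) ≤ L / 7 := by
      rw [div_le_div_iff₀ (by positivity) (by norm_num), hn_def, Nat.cast_mul]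
      nlinarith [Nat.cast_nonneg (α := ℝ) L]
    linarith
  have hw (d : ℕ) (hd : d ∈ range D) : 1 ≤ 2 * circleWeight n S₀ (d + 1) := by
    have hd1 : (d : ℝ) + 1 ≤ D := by exact_mod_cast mem_range.mp hd
    have : 2 * π * S₀ * ((d : ℝ) + 1) ≤ n :=
      calc 2 * π * S₀ * ((d : ℝ) + 1) ≤ 2 * π * S₀ * D := by gcongr
        _ = 2 * π / 7 * (D * (7 * S₀)) := by ring
        _ ≤ 2 * π / 7 * n := by gcongr; exact (le_div_iff₀ (by positivity)).mp hD_le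
        _ ≤ n := mul_le_of_le_one_left (Nat.cast_nonneg n) (by linarith [pi_lt_d2])
    linarith [half_le_circleWeight n hS.le (by positivity) this]
  calc 3 / 49 * ((n : ℝ) ^ 2 / S₀) = M * (6 / 7 * L) * (n / (14 * S₀)) := by
        rw [hn_def, Nat.cast_mul]; field_simp; ring
    _ ≤ M * (((L - D : ℕ) : ℝ) * D) := by
        rw [Nat.cast_sub (by exact_mod_cast (by linarith : (D : ℝ) ≤ L)), mul_assoc]
        gcongr
        · linarith
        · linarith
    _ ≤ M * ((L - D) • ∑ d ∈ range D, 2 * circleWeight n S₀ (d + 1)) := by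
        rw [nsmul_eq_mul]
        gcongr
        simpa using card_nsmul_le_sum (range D) _ 1 hw
    _ ≤ M * ∑ u ∈ range L, ∑ d ∈ range u, 2 * circleWeight n S₀ (d + 1) := by
        gcongr
        exact le_sum_range_sum_range (fun d => (mul_pos two_pos (circleWeight_pos n S₀ _)).le) D L
    _ = E1 n M S₀ := (E1_mul_eq hM L S₀).symm

/-- For the discrete circle `P_n` partitioned into `M` blocks of consecutive
indices, there exist constants `c₁, C₁ > 0` and `N` such that for all `n ≥ N`, all `M ∣ n`
with `M ≥ 3`, and all `S₀` with `M ≤ S₀ ≤ n/10`, one has `c₁·n²/S₀ ≤ E₁ ≤ C₁·n²/S₀`. -/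
theorem stmt12 :
    ∃ c₁ C₁ : ℝ, 0 < c₁ ∧ 0 < C₁ ∧ ∃ N : ℕ, ∀ n : ℕ, N ≤ n →
      ∀ M : ℕ, 3 ≤ M → M ∣ n →
      ∀ S₀ : ℝ, (M : ℝ) ≤ S₀ → S₀ ≤ (n : ℝ) / 10 →
        c₁ * ((n : ℝ) ^ 2 / S₀) ≤ E1 n M S₀ ∧
        E1 n M S₀ ≤ C₁ * ((n : ℝ) ^ 2 / S₀) := by
  refine ⟨3 / 49, 1, by norm_num, one_pos, 0, fun n _ M hM hMn S₀ hMS hSn => ?_⟩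
  obtain ⟨L, rfl⟩ := hMn
  have hS : 0 < S₀ := lt_of_lt_of_le (by norm_cast; omega) hMS
  have hL : 0 < L := Nat.pos_of_ne_zero fun hL => by simp [hL] at hSn; linarith
  exact ⟨le_E1 (by omega) hMS (by linarith), (E1_le (by omega) hL hS).trans_eq (one_mul _).symm⟩
end
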